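/- arXiv:2302.02753 — 3 statements merged into one kernel-verified Lean document; each statement's English description precedes it below -/
import Mathlib

section
/- The critical eigenfunction χ = χ_{h*} is non-decreasing: for all a ≤ b in ℝ, χ(a) ≤ χ(b). -/
open MeasureTheory ProbabilityTheory Real Set Filter Topology NNReal
open scoped Classical ENNReal

noncomputable section

namespace GFF

/-- Vertex set of the `(d+1)`-regular tree `𝕋`: `none` is the root `o`, and
`some (i, l)` is the vertex reached from the root by first crossing the `i`-th
edge at the root (`i : Fin (d+1)`) and then following the child steps in `l`
(each non-root vertex has `d` children). The fixed neighbour `ō` of the root is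
`some (Fin.last d, [])`. -/
abbrev V (d : ℕ) := Option (Fin (d + 1) × List (Fin d))

variable (d : ℕ)

/-- Graph distance from the root `o`. -/
def depth : V d → ℕ := fun v => v.elim 0 fun p => p.2.length + 1

/-- The geodesic path from the root `o` to `v`, including both endpoints. -/
def pathFromRoot : V d → List (V d)
  | none => [none]
  | some (i, l) => none :: (List.range (l.length + 1)).map fun k => some (i, l.take k)

/-- The forward tree `𝕋⁺`: vertices whose geodesic from `o` does not pass through
the fixed neighbour `ō = some (Fin.last d, [])`. -/
def forward : Set (V d) := {v | v.elim True fun p => p.1 ≠ Fin.last d}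

/-- The variance `σ_ν² = d/(d-1)` of the root field value. -/
def varRoot : ℝ≥0 := (d : ℝ≥0) / ((d : ℝ≥0) - 1)

/-- The variance `σ_Y² = (d+1)/d` of the innovations. -/
def varY : ℝ≥0 := ((d : ℝ≥0) + 1) / (d : ℝ≥0)

/-- The Gaussian free field on `𝕋` with root value `a`, built from the innovations
`ω`; this is the closed form of the recursion `φ_o = a`, `φ_x = φ_{x̄}/d + ω_x`,
where `x̄` is the parent of `x`. -/
def field (a : ℝ) (ω : V d → ℝ) : V d → ℝ
  | none => a
  | some (i, l) =>
      a / (d : ℝ) ^ (l.length + 1) +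
        ∑ k ∈ Finset.range (l.length + 1), ω (some (i, l.take k)) / (d : ℝ) ^ (l.length - k)

variable {Ω : Type} [MeasurableSpace Ω]

/-- `(P, Y)` is an environment for the Gaussian free field on `𝕋`: the `Y_x`,
`x ∈ 𝕋`, are independent centred Gaussians with `Var(Y_o) = d/(d-1)` and
`Var(Y_x) = (d+1)/d` for `x ≠ o`.  Under `P`, the field `field d (Y none ω) (Y · ω)`
then has the law of the GFF on `𝕋` (covariance = Green function), and
`field d a (Y · ω)` has its law conditioned on `φ_o = a`, i.e. `P_a`. -/
structure IsGFFEnv (P : Measure Ω) (Y : V d → Ω → ℝ) : Prop where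
  prob : IsProbabilityMeasure P
  meas : ∀ v, Measurable (Y v)
  indep : iIndepFun (m := fun _ : V d => (inferInstance : MeasurableSpace ℝ)) Y P
  law : ∀ v, P.map (Y v) = gaussianReal 0 (if v = none then varRoot d else varY d)

/-- The connected component `C_o^h` of the root in the level set `{φ ≥ h}`:
on a tree, `v` is connected to `o` in `{φ ≥ h}` iff `φ ≥ h` along the whole
geodesic from `o` to `v`. -/
def cluster (h : ℝ) (φ : V d → ℝ) : Set (V d) :=
  {v | ∀ z ∈ pathFromRoot d v, h ≤ φ z}

/-- The unconditioned field (root value `Y_o`). -/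
def fieldUncond (Y : V d → Ω → ℝ) (ω : Ω) : V d → ℝ :=
  field d (Y none ω) fun v => Y v ω

/-- `η(h,a) = P_a[|C_o^h| = ∞]`. -/
def η (P : Measure Ω) (Y : V d → Ω → ℝ) (h a : ℝ) : ℝ :=
  (P {ω | (cluster d h (field d a fun v => Y v ω)).Infinite}).toReal

/-- `η⁺(h,a) = P_a[|C_o^h ∩ 𝕋⁺| = ∞]`. -/
def ηplus (P : Measure Ω) (Y : V d → Ω → ℝ) (h a : ℝ) : ℝ :=
  (P {ω | (cluster d h (field d a fun v => Y v ω) ∩ forward d).Infinite}).toReal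

/-- The centred Gaussian measure `ν` with variance `d/(d-1)`. -/
def ν : Measure ℝ := gaussianReal 0 (varRoot d)

/-- The centred Gaussian density `ρ_Y` with variance `(d+1)/d`. -/
def ρY : ℝ → ℝ := gaussianPDFReal 0 (varY d)

/-- The operator `L_h` on `L²(ν)`:
`L_h[f](a) = 1_{[h,∞)}(a) · d · ∫_{[h,∞)} f(x) ρ_Y(x − a/d) dx`. -/
def Lop (h : ℝ) (f : ℝ → ℝ) : ℝ → ℝ :=
  (Ici h).indicator fun a => (d : ℝ) * ∫ x in Ici h, f x * ρY d (x - a / d)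

/-- `(hstar, χ)` is the critical pair: `χ = χ_{h*}` is the unique non-negative
unit-`L²(ν)`-norm eigenfunction of `L_{h*}`, continuous and strictly positive on
`[h*,∞)`, vanishing on `(−∞,h*)`, with eigenvalue `λ_{h*} = 1`; this
characterises the critical height `h*` (the unique `h` with `λ_h = 1`). -/
structure IsCriticalPair (hstar : ℝ) (χ : ℝ → ℝ) : Prop where
  cont : ContinuousOn χ (Ici hstar)
  nonneg : ∀ a, 0 ≤ χ a
  pos : ∀ a, hstar ≤ a → 0 < χ a
  zero : ∀ a, a < hstar → χ a = 0
  norm : (∫ a, χ a ^ 2 ∂(ν d)) = 1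
  eigen : ∀ a, Lop d hstar χ a = χ a

/-- The constant `C₁ = Γ(1/2)⁻¹ √( (2d/(d−1)) ⟨1,χ⟩_ν / ⟨χ,χ²⟩_ν )`. -/
def Cone (χ : ℝ → ℝ) : ℝ :=
  (1 / Real.Gamma (1 / 2)) *
    Real.sqrt ((2 * d / (d - 1)) * (∫ a, χ a ∂(ν d)) / (∫ a, χ a ^ 3 ∂(ν d)))

/-- The constant `C₂ = 2 ((d−1)/(d+1)) ⟨Id,χ²⟩_ν / ⟨χ,χ²⟩_ν`. -/
def Ctwo (χ : ℝ → ℝ) : ℝ :=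
  2 * ((d - 1) / (d + 1)) * (∫ a, a * χ a ^ 2 ∂(ν d)) / (∫ a, χ a ^ 3 ∂(ν d))

/-- The critical cluster in the forward tree, `C_o^{h*} ∩ 𝕋⁺`. -/
def fwdCluster (hstar a : ℝ) (Y : V d → Ω → ℝ) (ω : Ω) : Set (V d) :=
  cluster d hstar (field d a fun v => Y v ω) ∩ forward d

/-- The Laplace transform `𝓛_a(s) = E_a[e^{−s|C_o^{h*} ∩ 𝕋⁺|}]` (with
`e^{-s·∞} = 0` for `s > 0` encoded by the `Finite` case split). -/
def laplaceFwd (P : Measure Ω) (Y : V d → Ω → ℝ) (hstar a s : ℝ) : ℝ :=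
  ∫ ω, (if (fwdCluster d hstar a Y ω).Finite
    then Real.exp (-s * (fwdCluster d hstar a Y ω).ncard) else 0) ∂P

/-- The Laplace transform `𝓛̃_a(s) = E_a[e^{−s|C_o^{h*}|}]`. -/
def laplaceFull (P : Measure Ω) (Y : V d → Ω → ℝ) (hstar a s : ℝ) : ℝ :=
  ∫ ω, (if (cluster d hstar (field d a fun v => Y v ω)).Finite
    then Real.exp (-s * (cluster d hstar (field d a fun v => Y v ω)).ncard) else 0) ∂P

/-- `γ_s(a) = 1 − 𝓛_a(s)` for `a ≥ h*`, and `0` for `a < h*`. -/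
def γfun (P : Measure Ω) (Y : V d → Ω → ℝ) (hstar s a : ℝ) : ℝ :=
  if hstar ≤ a then 1 - laplaceFwd d P Y hstar a s else 0

/-- `a₁(s) = ⟨γ_s, χ⟩_ν`. -/
def aone (P : Measure Ω) (Y : V d → Ω → ℝ) (hstar : ℝ) (χ : ℝ → ℝ) (s : ℝ) : ℝ :=
  ∫ a, γfun d P Y hstar s a * χ a ∂(ν d)

/-- The `n`-th generation `Z_n = {x ∈ C_o^{h*} ∩ 𝕋⁺ : d(o,x) = n}`. -/
def gen (hstar a : ℝ) (Y : V d → Ω → ℝ) (ω : Ω) (n : ℕ) : Set (V d) :=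
  {x | x ∈ fwdCluster d hstar a Y ω ∧ depth d x = n}

/-- The shifted Gaussian measure `ν*`, with density `ρ_{ν*}(x) = ρ_ν(x + h*)`. -/
def νstar (hstar : ℝ) : Measure ℝ := gaussianReal (-hstar) (varRoot d)

/-- The operator `H_h[f](a) = ∫_0^∞ f(x) ρ_Y(x − a/d + ((d−1)/d)h) dx` for `a ≥ 0`,
and `0` for `a < 0` (so that `H_h = d⁻¹ θ_h L_h θ_h⁻¹`). -/
def Hop (h : ℝ) (f : ℝ → ℝ) : ℝ → ℝ :=
  (Ici (0:ℝ)).indicator fun a =>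
    ∫ x in Ici (0:ℝ), f x * ρY d (x - a / d + ((d - 1) / d) * h)

/-!
Let `D(s) = ∫_{[h*,∞)} (χ(a) − χ(a+s))⁺ χ(a) dν(a)`. Since `χ` is continuous and positive
on `[h*,∞)`, `D(s) = 0` forces `χ(a) ≤ χ(a+s)` there. Writing `χ(a+s) = L χ(a+s)` and
shifting the integration variable by `s/d` turns the integral over `[h*,∞)` into one over
`[h* − s/d,∞) ⊇ [h*,∞)`, whence `(χ(a) − χ(a+s))⁺ ≤ L[(χ − χ(· + s/d))⁺](a)`. Pairing with `χ`
and moving `L` onto `χ` (it is self-adjoint in `L²(ν)`, with `Lχ = χ`) gives `D(s) ≤ D(s/d)`,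
so `D(s) ≤ D(s/dⁿ) → 0` by continuity of `χ` and dominated convergence.
-/

theorem le_of_le_comp_div_of_tendsto {β : Type*} [TopologicalSpace β] [Preorder β]
    [OrderClosedTopology β] {φ : ℝ → β} {b : β} {c : ℝ} (hc : 1 < c)
    (hφ : ∀ s, 0 < s → φ s ≤ φ (s / c)) (hlim : Tendsto φ (𝓝[>] 0) (𝓝 b))
    {s : ℝ} (hs : 0 < s) : φ s ≤ b := by
  have hc₀ : 0 < c := one_pos.trans hc
  have hle : ∀ n : ℕ, φ s ≤ φ (s / c ^ n) := by
    intro n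
    induction n with
    | zero => simp
    | succ n ih => simpa [div_div, ← pow_succ] using ih.trans (hφ _ (by positivity))
  have hseq : Tendsto (fun n : ℕ => s / c ^ n) atTop (𝓝[>] 0) :=
    tendsto_nhdsWithin_iff.2 ⟨tendsto_const_nhds.div_atTop (tendsto_pow_atTop_atTop_of_one_lt hc),
      Eventually.of_forall fun n => by simp only [mem_Ioi]; positivity⟩
  exact ge_of_tendsto (hlim.comp hseq) (Eventually.of_forall hle)

theorem setLIntegral_Ici_comp_add_le (g : ℝ → ℝ≥0∞) (h : ℝ) {t : ℝ} (ht : 0 ≤ t) :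
    ∫⁻ x in Ici h, g (x + t) ≤ ∫⁻ x in Ici h, g x :=
  calc ∫⁻ x in Ici h, g (x + t)
      ≤ ∫⁻ x in Ici (h - t), g (x + t) := lintegral_mono_set (Ici_subset_Ici.2 (by linarith))
    _ = ∫⁻ x in Ici h, g x := by
      rw [← preimage_add_const_Ici]
      exact (measurePreserving_add_right volume t).setLIntegral_comp_preimage_emb
        (measurableEmbedding_addRight t) g _

theorem lintegral_withDensity_mul_lintegral_comm {α : Type*} [MeasurableSpace α]
    {μ : Measure α} [SFinite μ] {p : α → ℝ≥0∞} (hp : Measurable p)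
    {K : α → α → ℝ≥0∞} (hK : Measurable (Function.uncurry K))
    (hsymm : ∀ a x, p a * K a x = p x * K x a) {f g : α → ℝ≥0∞}
    (hf : Measurable f) (hg : Measurable g) :
    ∫⁻ a, g a * ∫⁻ x, K a x * f x ∂μ ∂(μ.withDensity p)
      = ∫⁻ x, f x * ∫⁻ a, K x a * g a ∂μ ∂(μ.withDensity p) := by
  have hgKf : Measurable fun a => g a * ∫⁻ x, K a x * f x ∂μ :=
    hg.mul (hK.mul (hf.comp measurable_snd)).lintegral_prod_right'
  have hfKg : Measurable fun x => f x * ∫⁻ a, K x a * g a ∂μ :=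
    hf.mul (hK.mul (hg.comp measurable_snd)).lintegral_prod_right'
  rw [lintegral_withDensity_eq_lintegral_mul _ hp hgKf,
    lintegral_withDensity_eq_lintegral_mul _ hp hfKg]
  calc ∫⁻ a, p a * (g a * ∫⁻ x, K a x * f x ∂μ) ∂μ
      = ∫⁻ a, ∫⁻ x, p a * K a x * (g a * f x) ∂μ ∂μ := by
        refine lintegral_congr fun a => ?_
        have hKf : Measurable fun x => K a x * f x := hK.of_uncurry_left.mul hf
        rw [← mul_assoc, ← lintegral_const_mul _ hKf]
        exact lintegral_congr fun x => by ring
    _ = ∫⁻ x, ∫⁻ a, p x * K x a * (g a * f x) ∂μ ∂μ := by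
        rw [lintegral_lintegral_swap]
        · simp_rw [hsymm]
        · fun_prop
    _ = ∫⁻ x, p x * (f x * ∫⁻ a, K x a * g a ∂μ) ∂μ := by
        refine lintegral_congr fun x => ?_
        have hKg : Measurable fun a => K x a * g a := hK.of_uncurry_left.mul hg
        rw [← mul_assoc, ← lintegral_const_mul _ hKg]
        exact lintegral_congr fun a => by ring

variable {d : ℕ}

theorem coe_varRoot (hd : 1 ≤ d) : (varRoot d : ℝ) = d / (d - 1) := by
  rw [varRoot, NNReal.coe_div, NNReal.coe_sub (by exact_mod_cast hd)]
  simp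

theorem coe_varY : (varY d : ℝ) = (d + 1) / d := by
  simp [varY]

theorem varRoot_ne_zero (hd : 2 ≤ d) : varRoot d ≠ 0 := by
  have h : (1 : ℝ≥0) < d := by exact_mod_cast hd
  exact div_ne_zero (by positivity) (tsub_pos_of_lt h).ne'

/-- Up to an additive constant, the logarithm of either side is
`−(d x² − 2 a x + d a²) / (2 (d + 1))`. -/
theorem gaussianPDFReal_varRoot_mul_ρY_comm (hd : 2 ≤ d) (a x : ℝ) :
    gaussianPDFReal 0 (varRoot d) a * ρY d (x - a / d)
      = gaussianPDFReal 0 (varRoot d) x * ρY d (a - x / d) := by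
  have hd' : (2 : ℝ) ≤ d := by exact_mod_cast hd
  have hd₁ : (d : ℝ) - 1 ≠ 0 := by linarith
  have hd₀ : (d : ℝ) ≠ 0 := by linarith
  simp only [ρY, gaussianPDFReal, sub_zero, coe_varRoot (one_le_two.trans hd), coe_varY]
  rw [mul_mul_mul_comm, ← Real.exp_add, mul_mul_mul_comm _ (Real.exp _), ← Real.exp_add]
  congr 2
  field_simp
  ring

/-- The kernel of `L_h`, valued in `ℝ≥0∞` so that the whole argument runs on lower integrals
and never needs integrability. -/
def kernelL (d : ℕ) (a x : ℝ) : ℝ≥0∞ := ENNReal.ofReal (d * ρY d (x - a / d))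

theorem measurable_kernelL : Measurable (Function.uncurry (kernelL d)) := by
  unfold kernelL ρY
  fun_prop

theorem gaussianPDF_varRoot_mul_kernelL_comm (hd : 2 ≤ d) (a x : ℝ) :
    gaussianPDF 0 (varRoot d) a * kernelL d a x = gaussianPDF 0 (varRoot d) x * kernelL d x a := by
  simp only [gaussianPDF, kernelL]
  rw [← ENNReal.ofReal_mul (gaussianPDFReal_nonneg _ _ _),
    ← ENNReal.ofReal_mul (gaussianPDFReal_nonneg _ _ _)]
  congr 1
  linear_combination (d : ℝ) * gaussianPDFReal_varRoot_mul_ρY_comm hd a x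

theorem ν_restrict_Ici (hd : 2 ≤ d) (h : ℝ) :
    (ν d).restrict (Ici h) = (volume.restrict (Ici h)).withDensity (gaussianPDF 0 (varRoot d)) := by
  rw [ν, gaussianReal_of_var_ne_zero _ (varRoot_ne_zero hd), restrict_withDensity measurableSet_Ici]

def monotonicityDefect (d : ℕ) (h : ℝ) (χ : ℝ → ℝ) (s : ℝ) : ℝ≥0∞ :=
  ∫⁻ a in Ici h, ENNReal.ofReal (χ a - χ (a + s)) * ENNReal.ofReal (χ a) ∂(ν d)

namespace IsCriticalPair

variable {hstar : ℝ} {χ : ℝ → ℝ}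

theorem measurable (hcrit : IsCriticalPair d hstar χ) : Measurable χ := by
  have hχ : (Ici hstar).piecewise χ 0 = χ := by
    ext a
    by_cases ha : hstar ≤ a
    · exact piecewise_eq_of_mem _ _ _ ha
    · rw [piecewise_eq_of_notMem _ _ _ (show a ∉ Ici hstar from ha), hcrit.zero a (not_le.1 ha),
        Pi.zero_apply]
  exact hχ ▸ hcrit.cont.measurable_piecewise continuousOn_const measurableSet_Ici

theorem ofReal_eq_setLIntegral_kernelL (hcrit : IsCriticalPair d hstar χ) {a : ℝ}
    (ha : hstar ≤ a) :
    ENNReal.ofReal (χ a) = ∫⁻ x in Ici hstar, kernelL d a x * ENNReal.ofReal (χ x) := by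
  have heigen : (d : ℝ) * ∫ x in Ici hstar, χ x * ρY d (x - a / d) = χ a := by
    simpa [Lop, indicator_of_mem (mem_Ici.2 ha)] using hcrit.eigen a
  have hint : IntegrableOn (fun x => χ x * ρY d (x - a / d)) (Ici hstar) :=
    Integrable.of_integral_ne_zero fun h0 => by
      rw [h0, mul_zero] at heigen
      exact (hcrit.pos a ha).ne' heigen.symm
  have hρ : ∀ y, 0 ≤ ρY d y := gaussianPDFReal_nonneg 0 (varY d)
  rw [← heigen, ← integral_const_mul, ofReal_integral_eq_lintegral_ofReal (hint.const_mul _)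
    (Eventually.of_forall fun x => mul_nonneg d.cast_nonneg (mul_nonneg (hcrit.nonneg x) (hρ _)))]
  refine lintegral_congr fun x => ?_
  rw [kernelL, ← ENNReal.ofReal_mul (mul_nonneg d.cast_nonneg (hρ _))]
  ring_nf

theorem ofReal_sub_le_setLIntegral_kernelL (hcrit : IsCriticalPair d hstar χ) {a s : ℝ}
    (ha : hstar ≤ a) (hs : 0 ≤ s) :
    ENNReal.ofReal (χ a - χ (a + s))
      ≤ ∫⁻ x in Ici hstar, kernelL d a x * ENNReal.ofReal (χ x - χ (x + s / d)) := by
  set t := s / d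
  have hK : Measurable (kernelL d a) := measurable_kernelL.of_uncurry_left
  have hshift : ∫⁻ x in Ici hstar, kernelL d a x * ENNReal.ofReal (χ (x + t))
      ≤ ENNReal.ofReal (χ (a + s)) := by
    have hkernel : ∀ x, kernelL d a x = kernelL d (a + s) (x + t) := fun x => by
      rw [kernelL, kernelL, add_div, add_sub_add_right_eq_sub]
    simp_rw [hkernel, hcrit.ofReal_eq_setLIntegral_kernelL (ha.trans (le_add_of_nonneg_right hs))]
    exact setLIntegral_Ici_comp_add_le (fun y => kernelL d (a + s) y * ENNReal.ofReal (χ y)) hstar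
      (by positivity)
  have hsplit : ∀ x, ENNReal.ofReal (χ x)
      ≤ ENNReal.ofReal (χ (x + t)) + ENNReal.ofReal (χ x - χ (x + t)) := fun x => by
    simpa only [add_sub_cancel] using ENNReal.ofReal_add_le (p := χ (x + t)) (q := χ x - χ (x + t))
  rw [ENNReal.ofReal_sub _ (hcrit.nonneg _), tsub_le_iff_left]
  calc ENNReal.ofReal (χ a)
      = ∫⁻ x in Ici hstar, kernelL d a x * ENNReal.ofReal (χ x) :=
        hcrit.ofReal_eq_setLIntegral_kernelL ha
    _ ≤ ∫⁻ x in Ici hstar, (kernelL d a x * ENNReal.ofReal (χ (x + t))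
          + kernelL d a x * ENNReal.ofReal (χ x - χ (x + t))) :=
        lintegral_mono fun x => mul_add (kernelL d a x) _ _ ▸ mul_le_mul_right (hsplit x) _
    _ = (∫⁻ x in Ici hstar, kernelL d a x * ENNReal.ofReal (χ (x + t)))
          + ∫⁻ x in Ici hstar, kernelL d a x * ENNReal.ofReal (χ x - χ (x + t)) :=
        lintegral_add_left
          (hK.mul (hcrit.measurable.comp (measurable_add_const t)).ennreal_ofReal) _
    _ ≤ _ := add_le_add_left hshift _

theorem monotonicityDefect_le_div (hd : 2 ≤ d) (hcrit : IsCriticalPair d hstar χ) {s : ℝ}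
    (hs : 0 ≤ s) : monotonicityDefect d hstar χ s ≤ monotonicityDefect d hstar χ (s / d) := by
  set D : ℝ → ℝ≥0∞ := fun x => ENNReal.ofReal (χ x - χ (x + s / d))
  have hD : Measurable D :=
    (hcrit.measurable.sub (hcrit.measurable.comp (measurable_add_const _))).ennreal_ofReal
  unfold monotonicityDefect
  calc ∫⁻ a in Ici hstar, ENNReal.ofReal (χ a - χ (a + s)) * ENNReal.ofReal (χ a) ∂(ν d)
      ≤ ∫⁻ a in Ici hstar, ENNReal.ofReal (χ a) * (∫⁻ x in Ici hstar, kernelL d a x * D x) ∂(ν d) :=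
        setLIntegral_mono' measurableSet_Ici fun a ha => by
          rw [mul_comm]
          exact mul_le_mul_right (hcrit.ofReal_sub_le_setLIntegral_kernelL ha hs) _
    _ = ∫⁻ x in Ici hstar,
          D x * (∫⁻ a in Ici hstar, kernelL d x a * ENNReal.ofReal (χ a)) ∂(ν d) := by
        rw [ν_restrict_Ici hd]
        exact lintegral_withDensity_mul_lintegral_comm (measurable_gaussianPDF _ _)
          measurable_kernelL (gaussianPDF_varRoot_mul_kernelL_comm hd) hD
          hcrit.measurable.ennreal_ofReal
    _ = ∫⁻ x in Ici hstar, D x * ENNReal.ofReal (χ x) ∂(ν d) :=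
        setLIntegral_congr_fun measurableSet_Ici fun x hx => by
          rw [← hcrit.ofReal_eq_setLIntegral_kernelL hx]

theorem tendsto_monotonicityDefect (hcrit : IsCriticalPair d hstar χ) :
    Tendsto (monotonicityDefect d hstar χ) (𝓝[>] 0) (𝓝 0) := by
  have hsq : Integrable (fun a => χ a ^ 2) (ν d) :=
    Integrable.of_integral_ne_zero (by rw [hcrit.norm]; exact one_ne_zero)
  have hfin : ∫⁻ a in Ici hstar, ENNReal.ofReal (χ a) * ENNReal.ofReal (χ a) ∂(ν d) ≠ ⊤ := by
    refine ne_top_of_le_ne_top hsq.lintegral_lt_top.ne ((setLIntegral_le_lintegral _ _).trans_eq ?_)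
    simp_rw [← ENNReal.ofReal_mul (hcrit.nonneg _), sq]
  have hlim : ∀ a ∈ Ici hstar, Tendsto (fun t => χ (a + t)) (𝓝[>] 0) (𝓝 (χ a)) := fun a ha =>
    (hcrit.cont a ha).tendsto.comp <| tendsto_nhdsWithin_iff.2
      ⟨by simpa using (continuous_const_add a).continuousWithinAt.tendsto (x := 0) (s := Ioi 0),
        eventually_nhdsWithin_of_forall fun t ht => by
          simp only [mem_Ici, mem_Ioi] at ha ht ⊢; linarith⟩
  have h := tendsto_lintegral_filter_of_dominated_convergence
    (μ := (ν d).restrict (Ici hstar)) (l := 𝓝[>] 0)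
    (F := fun t a => ENNReal.ofReal (χ a - χ (a + t)) * ENNReal.ofReal (χ a)) (f := 0)
    (fun a => ENNReal.ofReal (χ a) * ENNReal.ofReal (χ a))
    (Eventually.of_forall fun t => ((hcrit.measurable.sub (hcrit.measurable.comp
      (measurable_add_const t))).ennreal_ofReal.mul hcrit.measurable.ennreal_ofReal))
    (Eventually.of_forall fun t => ae_of_all _ fun a => mul_le_mul_left
      (ENNReal.ofReal_le_ofReal (sub_le_self _ (hcrit.nonneg _))) _)
    hfin
    ((ae_restrict_iff' measurableSet_Ici).2 (ae_of_all _ fun a ha => by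
      simpa using ENNReal.Tendsto.mul_const
        (ENNReal.tendsto_ofReal ((tendsto_const_nhds (x := χ a)).sub (hlim a ha)))
        (Or.inr ENNReal.ofReal_ne_top)))
  rwa [Pi.zero_def, lintegral_zero] at h

theorem monotonicityDefect_eq_zero (hd : 2 ≤ d) (hcrit : IsCriticalPair d hstar χ) {s : ℝ}
    (hs : 0 ≤ s) : monotonicityDefect d hstar χ s = 0 := by
  rcases hs.eq_or_lt with rfl | hs
  · simp [monotonicityDefect]
  exact nonpos_iff_eq_zero.1 <| le_of_le_comp_div_of_tendsto (c := d) (by exact_mod_cast hd)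
    (fun s hs => hcrit.monotonicityDefect_le_div hd hs.le) hcrit.tendsto_monotonicityDefect hs

theorem le_add_of_monotonicityDefect_eq_zero (hd : 2 ≤ d) (hcrit : IsCriticalPair d hstar χ)
    {s : ℝ} (hs : 0 ≤ s) (h0 : monotonicityDefect d hstar χ s = 0) {a : ℝ} (ha : hstar ≤ a) :
    χ a ≤ χ (a + s) := by
  have hν : ∀ᵐ b ∂(ν d).restrict (Ici hstar), χ b ≤ χ (b + s) := by
    have hmeas : Measurable fun b => ENNReal.ofReal (χ b - χ (b + s)) * ENNReal.ofReal (χ b) :=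
      (hcrit.measurable.sub (hcrit.measurable.comp (measurable_add_const s))).ennreal_ofReal.mul
        hcrit.measurable.ennreal_ofReal
    filter_upwards [(lintegral_eq_zero_iff hmeas).1 h0, ae_restrict_mem measurableSet_Ici]
      with b hb0 hb
    rcases mul_eq_zero.1 hb0 with hb0 | hb0
    · exact sub_nonpos.1 (ENNReal.ofReal_eq_zero.1 hb0)
    · exact absurd (ENNReal.ofReal_eq_zero.1 hb0) (hcrit.pos b hb).not_ge
  have hac : volume ≪ ν d := gaussianReal_absolutelyContinuous' 0 (varRoot_ne_zero hd)
  have hvol : (fun b => max (χ b) (χ (b + s))) =ᵐ[volume.restrict (Ici hstar)]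
      fun b => χ (b + s) :=
    Eventually.mono ((hac.restrict _).ae_le hν) fun b hb => max_eq_right hb
  have hshift : ContinuousOn (fun b => χ (b + s)) (Ici hstar) :=
    hcrit.cont.comp (continuous_add_const s).continuousOn fun b hb => by
      simp only [mem_Ici] at hb ⊢; linarith
  have heq := Measure.eqOn_of_ae_eq hvol (ContinuousOn.sup hcrit.cont hshift) hshift
    (by rw [interior_Ici, closure_Ioi])
  exact max_eq_right_iff.1 (heq ha)

theorem monotoneOn (hd : 2 ≤ d) (hcrit : IsCriticalPair d hstar χ) : MonotoneOn χ (Ici hstar) :=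
  fun a ha b _ hab => by
    have hs : 0 ≤ b - a := sub_nonneg.2 hab
    simpa using hcrit.le_add_of_monotonicityDefect_eq_zero hd hs
      (hcrit.monotonicityDefect_eq_zero hd hs) ha

end IsCriticalPair

/-- the critical eigenfunction `χ = χ_{h*}` is non-decreasing:
for all `a ≤ b`, `χ(a) ≤ χ(b)`. -/
theorem chi_monotone (d : ℕ) (hd : 2 ≤ d)
    (hstar : ℝ) (χ : ℝ → ℝ) (hcrit : IsCriticalPair d hstar χ) :
    Monotone χ := by
  intro a b hab
  rcases lt_or_ge a hstar with ha | ha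
  · simpa only [hcrit.zero a ha] using hcrit.nonneg b
  · exact hcrit.monotoneOn hd ha (ha.trans hab) hab

end GFF
end
end

section
/- For every a ≥ h* and every ε > 0 there exist H < ∞ and N < ∞ such that P_a[Φ_n ≤ H for all n ≥ 0] ≥ 1 − ε and P_a[|Z_n| ≤ N for all n ≥ 0] ≥ 1 − ε, where Z_n = {x ∈ C_o^{h*} ∩ 𝕋⁺ : d(o,x) = n} is the n-th generation of the critical cluster in the forward tree and Φ_n = max_{x ∈ Z_n} φ_x (with the convention max ∅ = −∞). -/
open MeasureTheory ProbabilityTheory Real Set Filter Topology NNReal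
open scoped Classical ENNReal

noncomputable section

namespace GFF

variable (d : ℕ)

variable {Ω : Type} [MeasurableSpace Ω]

/-! `M_n = ∑_{x ∈ Z_n} χ(φ_x)` is a nonnegative martingale for the filtration of the innovations
up to depth `n`: integrating out the innovation of a child `y` of `x` turns `χ(φ_y)` into
`χ(φ_x)/d` by the eigenvalue equation `L_{h*} χ = χ` (the constraint `φ_y ≥ h*` is free since
`χ = 0` below `h*`), and `x` has `d` children in `𝕋⁺`. Doob's maximal inequality gives
`P_a[sup_n M_n ≥ λ] ≤ χ(a)/λ`. Off this event, every `x ∈ Z_n` has `χ(φ_x) < λ`, which bounds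
`φ_x` because `χ(b) → ∞`, and `|Z_n| · inf χ < λ`, which bounds `|Z_n|` because `χ` is bounded
below by a positive constant on `[h*, ∞)`. Both properties of `χ` come from iterating the
eigenvalue equation in the form `χ(b) ≥ d · P(|U| ≤ w) · min_{|x - b/d| ≤ w} χ(x)`,
`U ~ N(0, (d+1)/d)`, with `w` chosen so that `d · P(|U| ≤ w) > 1`. -/

section Tree

/-- Only the `d` children of the root that lie in `𝕋⁺` are enumerated. -/
def child : V d → Fin d → V d
  | none, j => some (j.castSucc, [])
  | some (i, l), j => some (i, l ++ [j])

def forwardSphere : ℕ → Finset (V d)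
  | 0 => {none}
  | n + 1 => (forwardSphere n ×ˢ Finset.univ).image fun p => child d p.1 p.2

def forwardBall (n : ℕ) : Finset (V d) :=
  (Finset.range (n + 1)).biUnion (forwardSphere d)

variable {d}

@[simp]
lemma depth_child (x : V d) (j : Fin d) : depth d (child d x j) = depth d x + 1 := by
  rcases x with _ | ⟨i, l⟩ <;> simp [child, depth]

@[simp]
lemma child_mem_forward_iff (x : V d) (j : Fin d) : child d x j ∈ forward d ↔ x ∈ forward d := by
  rcases x with _ | ⟨i, l⟩
  · simp [child, forward, (Fin.castSucc_lt_last j).ne]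
  · simp [child, forward]

lemma child_ne_none (x : V d) (j : Fin d) : child d x j ≠ none := by
  rcases x with _ | ⟨i, l⟩ <;> simp [child]

lemma child_injective : Function.Injective fun p : V d × Fin d => child d p.1 p.2 := by
  rintro ⟨_ | ⟨i, l⟩, j⟩ ⟨_ | ⟨i', l'⟩, j'⟩ h
  all_goals simp only [child, Option.some.injEq, Prod.mk.injEq] at h
  · simpa using h
  · simpa using h.2.symm
  · simpa using h.2
  · obtain ⟨rfl, h⟩ := h
    obtain ⟨rfl, hj⟩ := List.append_inj' h rfl
    rw [List.singleton_inj.1 hj]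

lemma mem_forwardSphere {n : ℕ} {x : V d} :
    x ∈ forwardSphere d n ↔ depth d x = n ∧ x ∈ forward d := by
  induction n generalizing x with
  | zero => rcases x with _ | ⟨i, l⟩ <;> simp [forwardSphere, depth, forward]
  | succ n ih =>
    simp only [forwardSphere, Finset.mem_image, Finset.mem_product, Finset.mem_univ, and_true,
      Prod.exists, ih]
    constructor
    · rintro ⟨y, j, ⟨rfl, hy⟩, rfl⟩
      simpa using hy
    · rintro ⟨hdepth, hfwd⟩
      rcases x with _ | ⟨i, l⟩
      · simp [depth] at hdepth
      · have hi : i ≠ Fin.last d := hfwd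
        rcases l.eq_nil_or_concat with rfl | ⟨l, j, rfl⟩
        · refine ⟨none, i.castPred hi, ⟨?_, trivial⟩, by simp [child]⟩
          simp [depth] at hdepth ⊢
          omega
        · refine ⟨some (i, l), j, ⟨?_, hi⟩, by simp [child]⟩
          simpa [depth] using hdepth

lemma mem_forwardBall {n : ℕ} {x : V d} :
    x ∈ forwardBall d n ↔ depth d x ≤ n ∧ x ∈ forward d := by
  simp only [forwardBall, Finset.mem_biUnion, Finset.mem_range, mem_forwardSphere]
  exact ⟨fun ⟨k, hk, hx, hf⟩ => ⟨by omega, hf⟩, fun ⟨hx, hf⟩ => ⟨_, by omega, rfl, hf⟩⟩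

lemma forwardSphere_subset_forwardBall {k n : ℕ} (hkn : k ≤ n) :
    forwardSphere d k ⊆ forwardBall d n := fun x hx => by
  rw [mem_forwardSphere] at hx
  exact mem_forwardBall.2 ⟨hx.1.trans_le hkn, hx.2⟩

lemma forwardBall_mono {m n : ℕ} (hmn : m ≤ n) : forwardBall d m ⊆ forwardBall d n :=
  fun x hx => by
    rw [mem_forwardBall] at hx ⊢
    exact ⟨hx.1.trans hmn, hx.2⟩

lemma sum_forwardSphere_succ {M : Type*} [AddCommMonoid M] (n : ℕ) (f : V d → M) :
    ∑ y ∈ forwardSphere d (n + 1), f y = ∑ x ∈ forwardSphere d n, ∑ j, f (child d x j) := by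
  rw [forwardSphere, Finset.sum_image (child_injective.injOn), Finset.sum_product]

lemma pathFromRoot_child (x : V d) (j : Fin d) :
    pathFromRoot d (child d x j) = pathFromRoot d x ++ [child d x j] := by
  rcases x with _ | ⟨i, l⟩
  · simp [child, pathFromRoot, List.range_succ]
  · simp only [child, pathFromRoot, List.length_append, List.length_singleton]
    rw [List.range_succ (n := l.length + 1)]
    simp only [List.map_append, List.cons_append, List.map_cons, List.map_nil, List.cons.injEq,
      true_and]
    congr 1
    · refine List.map_congr_left fun k hk => ?_
      rw [List.take_append_of_le_length (by simp at hk; omega)]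
    · simp

lemma mem_pathFromRoot_self (x : V d) : x ∈ pathFromRoot d x := by
  rcases x with _ | ⟨i, l⟩
  · simp [pathFromRoot]
  · simp only [pathFromRoot, List.mem_cons, List.mem_map, List.mem_range]
    exact Or.inr ⟨l.length, by omega, by simp⟩

lemma mem_forwardBall_of_mem_pathFromRoot {n : ℕ} {x z : V d} (hx : x ∈ forwardBall d n)
    (hz : z ∈ pathFromRoot d x) : z ∈ forwardBall d n := by
  rw [mem_forwardBall] at hx ⊢
  rcases x with _ | ⟨i, l⟩
  · simp_all [pathFromRoot]
  · simp only [pathFromRoot, List.mem_cons, List.mem_map, List.mem_range] at hz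
    rcases hz with rfl | ⟨k, hk, rfl⟩
    · exact ⟨by simp [depth], trivial⟩
    · refine ⟨?_, hx.2⟩
      have := hx.1
      simp only [depth, Option.elim, List.length_take] at this ⊢
      omega

lemma field_child (a : ℝ) (ω : V d → ℝ) (x : V d) (j : Fin d) :
    field d a ω (child d x j) = field d a ω x / d + ω (child d x j) := by
  rcases x with _ | ⟨i, l⟩
  · simp [child, field]
  · simp only [child, field, List.length_append, List.length_singleton]
    rw [Finset.sum_range_succ, List.take_of_length_le (by simp), Nat.sub_self, pow_zero, div_one,
      add_div, Finset.sum_div, div_div, ← pow_succ, ← add_assoc]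
    congr 2
    refine Finset.sum_congr rfl fun k hk => ?_
    rw [Finset.mem_range] at hk
    rw [List.take_append_of_le_length (by omega), div_div, ← pow_succ,
      show l.length - k + 1 = l.length + 1 - k by omega]

lemma field_congr {a : ℝ} {ω₁ ω₂ : V d → ℝ} {x : V d}
    (h : ∀ z ∈ pathFromRoot d x, ω₁ z = ω₂ z) : field d a ω₁ x = field d a ω₂ x := by
  rcases x with _ | ⟨i, l⟩
  · rfl
  · simp only [field]
    congr 1
    refine Finset.sum_congr rfl fun k hk => ?_
    rw [h]
    simp only [pathFromRoot, List.mem_cons, List.mem_map, List.mem_range]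
    exact Or.inr ⟨k, Finset.mem_range.1 hk, rfl⟩

lemma eqOn_field {a : ℝ} {ω₁ ω₂ : V d → ℝ} {n : ℕ} (h : EqOn ω₁ ω₂ (forwardBall d n)) :
    EqOn (field d a ω₁) (field d a ω₂) (forwardBall d n) := fun _ hx =>
  field_congr fun _ hz => h (mem_forwardBall_of_mem_pathFromRoot hx hz)

end Tree

section Eigenfunction

variable {d : ℕ} {hstar : ℝ} {χ : ℝ → ℝ}

lemma varY_ne_zero (hd : d ≠ 0) : varY d ≠ 0 := by
  simp [varY, hd]

protected lemma IsCriticalPair.measurable_s12 (hcrit : IsCriticalPair d hstar χ) : Measurable χ := by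
  have hχ : (Ici hstar).piecewise χ 0 = χ := by
    ext t
    by_cases ht : hstar ≤ t
    · simp [Set.piecewise, ht]
    · simp [Set.piecewise, ht, hcrit.zero t (not_le.1 ht)]
  rw [← hχ]
  exact hcrit.cont.measurable_piecewise continuousOn_const measurableSet_Ici

lemma IsCriticalPair.lintegral_gaussian (hcrit : IsCriticalPair d hstar χ) (hd : d ≠ 0)
    {b : ℝ} (hb : hstar ≤ b) :
    ∫⁻ u, ENNReal.ofReal (χ (b / d + u)) ∂gaussianReal 0 (varY d) = ENNReal.ofReal (χ b / d) := by
  have hd0 : (0 : ℝ) < d := by positivity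
  have heigen : ∫ x, χ x * ρY d (x - b / d) = χ b / d := by
    have h := hcrit.eigen b
    rw [Lop, indicator_of_mem (mem_Ici.2 hb), setIntegral_eq_integral_of_forall_compl_eq_zero
      fun x hx => by rw [hcrit.zero x (not_le.1 hx), zero_mul]] at h
    rw [eq_div_iff hd0.ne', mul_comm, h]
  have hint : Integrable fun x => χ x * ρY d (x - b / d) := by
    by_contra hni
    rw [integral_undef hni] at heigen
    exact (div_pos (hcrit.pos b hb) hd0).ne' heigen.symm
  rw [gaussianReal_of_var_ne_zero _ (varY_ne_zero hd),
    lintegral_withDensity_eq_lintegral_mul _ (measurable_gaussianPDF _ _)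
      (g := fun u => ENNReal.ofReal (χ (b / d + u)))
      (hcrit.measurable_s12.comp (measurable_const_add _)).ennreal_ofReal, ← heigen,
    ofReal_integral_eq_lintegral_ofReal hint
      (ae_of_all _ fun x => mul_nonneg (hcrit.nonneg x) (gaussianPDFReal_nonneg _ _ _))]
  conv_rhs => rw [← lintegral_add_right_eq_self _ (b / d)]
  congr with u
  simp [gaussianPDF, ρY, ← ENNReal.ofReal_mul (gaussianPDFReal_nonneg _ _ _), add_comm, mul_comm]

lemma IsCriticalPair.mul_le_of_le_on_window (hcrit : IsCriticalPair d hstar χ) (hd : d ≠ 0)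
    {b δ w : ℝ} (hb : hstar ≤ b) (hwin : ∀ x ∈ Icc (b / d - w) (b / d + w), δ ≤ χ x) :
    d * (gaussianReal 0 (varY d) (Icc (-w) w)).toReal * δ ≤ χ b := by
  have hd0 : (0 : ℝ) < d := by positivity
  have key : ENNReal.ofReal ((gaussianReal 0 (varY d) (Icc (-w) w)).toReal * δ) ≤
      ENNReal.ofReal (χ b / d) :=
    calc ENNReal.ofReal ((gaussianReal 0 (varY d) (Icc (-w) w)).toReal * δ)
        = ∫⁻ _ in Icc (-w) w, ENNReal.ofReal δ ∂gaussianReal 0 (varY d) := by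
          rw [setLIntegral_const, ENNReal.ofReal_mul ENNReal.toReal_nonneg,
            ENNReal.ofReal_toReal (measure_ne_top _ _), mul_comm]
      _ ≤ ∫⁻ u in Icc (-w) w, ENNReal.ofReal (χ (b / d + u)) ∂gaussianReal 0 (varY d) :=
          setLIntegral_mono (hcrit.measurable_s12.comp (measurable_const_add _)).ennreal_ofReal
            fun u hu => ENNReal.ofReal_le_ofReal (hwin _ ⟨by linarith [hu.1], by linarith [hu.2]⟩)
      _ ≤ _ := setLIntegral_le_lintegral _ _
      _ = _ := hcrit.lintegral_gaussian hd hb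
  rw [ENNReal.ofReal_le_ofReal_iff (div_nonneg (hcrit.nonneg b) hd0.le), le_div_iff₀ hd0] at key
  linarith

lemma exists_one_lt_mul_gaussianReal_Icc {c : ℝ} (hc : 1 < c) (v : ℝ≥0) :
    ∃ w > 0, 1 < c * (gaussianReal 0 v (Icc (-w) w)).toReal := by
  have hlim : Tendsto (fun n : ℕ => c * (gaussianReal 0 v (Icc (-n) n)).toReal) atTop (𝓝 c) := by
    have h := tendsto_measure_iUnion_atTop (μ := gaussianReal 0 v)
      (s := fun n : ℕ => Metric.closedBall (0 : ℝ) n)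
      fun m n hmn => Metric.closedBall_subset_closedBall (by exact_mod_cast hmn)
    rw [Metric.iUnion_closedBall_nat, measure_univ] at h
    simpa [Real.closedBall_eq_Icc] using
      ((ENNReal.tendsto_toReal ENNReal.one_ne_top).comp h).const_mul c
  obtain ⟨n, hn0, hn⟩ := ((eventually_gt_atTop 0).and (hlim.eventually (lt_mem_nhds hc))).exists
  exact ⟨n, by exact_mod_cast hn0, hn⟩

lemma IsCriticalPair.exists_pos_le (hcrit : IsCriticalPair d hstar χ) (hd : 2 ≤ d) :
    ∃ δ > 0, ∀ b, hstar ≤ b → δ ≤ χ b := by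
  have hd2 : (2 : ℝ) ≤ d := by exact_mod_cast hd
  obtain ⟨w, hw, hq⟩ := exists_one_lt_mul_gaussianReal_Icc (by linarith : (1 : ℝ) < d) (varY d)
  -- beyond `K`, the window of `b` lies in `[h*, b - 1]`
  obtain ⟨K, hKw, hK2, hKh⟩ : ∃ K, d * (hstar + w) ≤ K ∧ 2 * w + 2 ≤ K ∧ hstar ≤ K :=
    ⟨max (d * (hstar + w)) (max (2 * w + 2) hstar), le_max_left _ _,
      le_max_of_le_right (le_max_left _ _), le_max_of_le_right (le_max_right _ _)⟩
  obtain ⟨x₀, hx₀, hmin⟩ := (isCompact_Icc (a := hstar) (b := K)).exists_isMinOn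
    (nonempty_Icc.2 hKh) (hcrit.cont.mono Icc_subset_Ici_self)
  have hind : ∀ j : ℕ, ∀ b ∈ Icc hstar (K + j), χ x₀ ≤ χ b := by
    intro j
    induction j with
    | zero => exact fun b hb => hmin (by simpa using hb)
    | succ j ih =>
      rintro b ⟨hb, hbj⟩
      by_cases hbK : b ≤ K + j
      · exact ih b ⟨hb, hbK⟩
      rw [not_le] at hbK
      push_cast at hbj
      have hb2 : b / d ≤ b / 2 := div_le_div_of_nonneg_left (by linarith) two_pos hd2
      have hbw : hstar + w ≤ b / d := (le_div_iff₀ (by linarith)).2 (by linarith)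
      have step := hcrit.mul_le_of_le_on_window (w := w) (by omega) hb
        fun x hx => ih x ⟨by linarith [hx.1], by linarith [hx.2]⟩
      nlinarith [hcrit.pos x₀ hx₀.1]
  refine ⟨χ x₀, hcrit.pos x₀ hx₀.1, fun b hb => ?_⟩
  obtain ⟨j, hj⟩ := exists_nat_ge (b - K)
  exact hind j b ⟨hb, by linarith⟩

lemma IsCriticalPair.tendsto_atTop (hcrit : IsCriticalPair d hstar χ) (hd : 2 ≤ d) :
    Tendsto χ atTop atTop := by
  obtain ⟨δ, hδ, hlow⟩ := hcrit.exists_pos_le hd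
  obtain ⟨w, -, hq⟩ :=
    exists_one_lt_mul_gaussianReal_Icc (by exact_mod_cast hd : (1 : ℝ) < d) (varY d)
  set q := d * (gaussianReal 0 (varY d) (Icc (-w) w)).toReal
  have hgrow : ∀ j : ℕ, ∃ B, hstar ≤ B ∧ ∀ b, B ≤ b → q ^ j * δ ≤ χ b := by
    intro j
    induction j with
    | zero => exact ⟨hstar, le_rfl, fun b hb => by simpa using hlow b hb⟩
    | succ j ih =>
      obtain ⟨B, hB, hBχ⟩ := ih
      refine ⟨max B (d * (B + w)), le_max_of_le_left hB, fun b hb => ?_⟩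
      have hbw : B + w ≤ b / d :=
        (le_div_iff₀ (by positivity)).2 (by linarith [le_max_right B (d * (B + w))])
      rw [pow_succ, mul_comm _ q, mul_assoc]
      exact hcrit.mul_le_of_le_on_window (by omega) (by linarith [le_max_left B (d * (B + w))])
        fun x hx => hBχ x (by linarith [hx.1])
  rw [tendsto_atTop_atTop]
  intro M
  obtain ⟨j, hj⟩ := pow_unbounded_of_one_lt (M / δ) hq
  obtain ⟨B, -, hB⟩ := hgrow j
  exact ⟨B, fun b hb => by linarith [hB b hb, (div_lt_iff₀ hδ).1 hj]⟩

end Eigenfunction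

section ClusterMass

variable {d : ℕ} {h : ℝ} {χ : ℝ → ℝ} {φ φ₁ φ₂ : V d → ℝ}

variable (d h χ) in
def clusterWeight (φ : V d → ℝ) (x : V d) : ℝ≥0∞ :=
  if x ∈ cluster d h φ then ENNReal.ofReal (χ (φ x)) else 0

variable (d h χ) in
/-- The martingale `M_n` of the paper, as a function of the field `φ`. -/
def clusterMass (φ : V d → ℝ) (n : ℕ) : ℝ≥0∞ :=
  ∑ x ∈ forwardSphere d n, clusterWeight d h χ φ x

lemma le_of_mem_cluster {x : V d} (hx : x ∈ cluster d h φ) : h ≤ φ x :=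
  hx x (mem_pathFromRoot_self x)

lemma mem_cluster_child {x : V d} {j : Fin d} :
    child d x j ∈ cluster d h φ ↔ x ∈ cluster d h φ ∧ h ≤ φ (child d x j) := by
  simp only [cluster, Set.mem_ofPred_eq, pathFromRoot_child, List.forall_mem_append,
    List.forall_mem_singleton]

lemma mem_cluster_congr {x : V d} (hφ : ∀ z ∈ pathFromRoot d x, φ₁ z = φ₂ z) :
    x ∈ cluster d h φ₁ ↔ x ∈ cluster d h φ₂ :=
  forall₂_congr fun _ hz => by rw [hφ _ hz]

lemma clusterWeight_congr {x : V d} (hφ : ∀ z ∈ pathFromRoot d x, φ₁ z = φ₂ z) :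
    clusterWeight d h χ φ₁ x = clusterWeight d h χ φ₂ x := by
  simp only [clusterWeight, mem_cluster_congr hφ, hφ x (mem_pathFromRoot_self x)]

lemma clusterMass_congr {k n : ℕ} (hkn : k ≤ n) (hφ : EqOn φ₁ φ₂ (forwardBall d n)) :
    clusterMass d h χ φ₁ k = clusterMass d h χ φ₂ k :=
  Finset.sum_congr rfl fun _ hx => clusterWeight_congr fun _ hz =>
    hφ (mem_forwardBall_of_mem_pathFromRoot (forwardSphere_subset_forwardBall hkn hx) hz)

lemma clusterWeight_child (hχ : ∀ t < h, χ t = 0) (x : V d) (j : Fin d) :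
    clusterWeight d h χ φ (child d x j) =
      if x ∈ cluster d h φ then ENNReal.ofReal (χ (φ (child d x j))) else 0 := by
  by_cases hx : x ∈ cluster d h φ
  · by_cases hy : h ≤ φ (child d x j)
    · simp [clusterWeight, mem_cluster_child, hx, hy]
    · simp [clusterWeight, mem_cluster_child, hx, hy, hχ _ (not_le.1 hy)]
  · simp [clusterWeight, mem_cluster_child, hx]

lemma clusterMass_zero (hroot : h ≤ φ none) :
    clusterMass d h χ φ 0 = ENNReal.ofReal (χ (φ none)) := by
  have hmem : (none : V d) ∈ cluster d h φ := fun z hz => by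
    simp only [pathFromRoot, List.mem_singleton] at hz
    exact hz ▸ hroot
  simp [clusterMass, forwardSphere, clusterWeight, hmem]

lemma clusterMass_ne_top (n : ℕ) : clusterMass d h χ φ n ≠ ⊤ :=
  ENNReal.sum_ne_top.2 fun x _ => by unfold clusterWeight; split_ifs <;> simp

lemma measurableSet_mem_cluster (x : V d) :
    MeasurableSet {φ : V d → ℝ | x ∈ cluster d h φ} := by
  have hset : {φ : V d → ℝ | x ∈ cluster d h φ} =
      ⋂ z ∈ {z | z ∈ pathFromRoot d x}, {φ | h ≤ φ z} := by
    ext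
    simp [cluster]
  rw [hset]
  exact MeasurableSet.biInter (pathFromRoot d x).finite_toSet.countable
    fun z _ => measurableSet_le measurable_const (measurable_pi_apply (X := fun _ : V d => ℝ) z)

lemma measurable_clusterWeight (hχ : Measurable χ) (x : V d) :
    Measurable fun φ : V d → ℝ => clusterWeight d h χ φ x :=
  Measurable.ite (measurableSet_mem_cluster x) (hχ.comp (measurable_pi_apply x)).ennreal_ofReal
    measurable_const

lemma measurable_clusterMass (hχ : Measurable χ) (n : ℕ) :
    Measurable fun φ : V d → ℝ => clusterMass d h χ φ n :=
  Finset.measurable_sum _ fun x _ => measurable_clusterWeight hχ x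

lemma measurable_field (a : ℝ) : Measurable (field d a) := by
  refine measurable_pi_lambda _ fun x => ?_
  rcases x with _ | ⟨i, l⟩
  · exact measurable_const
  · exact measurable_const.add
      (Finset.measurable_sum _ fun k _ => (measurable_pi_apply _).div_const _)

lemma clusterWeight_le_clusterMass {x : V d} {n : ℕ} (hx : x ∈ forwardSphere d n) :
    clusterWeight d h χ φ x ≤ clusterMass d h χ φ n :=
  Finset.single_le_sum (f := clusterWeight d h χ φ) (fun _ _ => zero_le) hx

lemma lt_of_clusterMass_lt {x : V d} {n : ℕ} {c : ℝ} (hx : x ∈ cluster d h φ ∩ forward d)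
    (hxn : depth d x = n) (hM : (clusterMass d h χ φ n).toReal < c) : χ (φ x) < c := by
  have hle := clusterWeight_le_clusterMass (h := h) (χ := χ) (φ := φ)
    (mem_forwardSphere.2 ⟨hxn, hx.2⟩)
  rw [clusterWeight, if_pos hx.1] at hle
  have := ENNReal.toReal_mono (clusterMass_ne_top n) hle
  rw [ENNReal.toReal_ofReal'] at this
  exact (le_max_left _ _).trans_lt (this.trans_lt hM)

lemma encard_generation_le {δ c : ℝ} (hδ : 0 < δ) (hχδ : ∀ t, h ≤ t → δ ≤ χ t) {n : ℕ}
    (hM : (clusterMass d h χ φ n).toReal < c) :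
    {x | x ∈ cluster d h φ ∩ forward d ∧ depth d x = n}.encard ≤ ⌈c / δ⌉₊ := by
  set s := (forwardSphere d n).filter (· ∈ cluster d h φ)
  have hs : {x | x ∈ cluster d h φ ∩ forward d ∧ depth d x = n} = s := by
    ext x
    simp only [s, Finset.coe_filter, mem_forwardSphere, mem_inter_iff, Set.mem_ofPred_eq]
    tauto
  have hmass : ENNReal.ofReal (s.card * δ) ≤ clusterMass d h χ φ n := by
    calc ENNReal.ofReal (s.card * δ) = s.card • ENNReal.ofReal δ := by
          rw [ENNReal.ofReal_mul (by positivity), ENNReal.ofReal_natCast, nsmul_eq_mul]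
      _ ≤ ∑ x ∈ s, clusterWeight d h χ φ x := Finset.card_nsmul_le_sum _ _ _ fun x hx => by
          rw [Finset.mem_filter] at hx
          rw [clusterWeight, if_pos hx.2]
          exact ENNReal.ofReal_le_ofReal (hχδ _ (le_of_mem_cluster hx.2))
      _ ≤ clusterMass d h χ φ n :=
          Finset.sum_le_sum_of_subset_of_nonneg (Finset.filter_subset _ _) fun _ _ _ => zero_le
  have hcard : (s.card : ℝ) ≤ c / δ :=
    (le_div_iff₀ hδ).2 (((ENNReal.ofReal_le_iff_le_toReal (clusterMass_ne_top n)).1 hmass).trans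
      hM.le)
  rw [hs, Set.encard_coe_eq_coe_finsetCard]
  exact_mod_cast Nat.cast_le.1 (hcard.trans (Nat.le_ceil _))

end ClusterMass

lemma lintegral_comp_prodMk_of_indepFun {Ω α β : Type*} [MeasurableSpace Ω] [MeasurableSpace α]
    [MeasurableSpace β] {P : Measure Ω} [IsFiniteMeasure P] {X : Ω → α} {U : Ω → β}
    (hX : Measurable X) (hU : Measurable U) (hXU : IndepFun X U P) {F : α × β → ℝ≥0∞}
    (hF : Measurable F) :
    ∫⁻ ω, F (X ω, U ω) ∂P = ∫⁻ ω, ∫⁻ u, F (X ω, u) ∂(P.map U) ∂P := by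
  rw [← lintegral_map hF (hX.prodMk hU),
    (indepFun_iff_map_prod_eq_prod_map_map hX.aemeasurable hU.aemeasurable).1 hXU,
    lintegral_prod _ hF.aemeasurable, lintegral_map hF.lintegral_prod_right' hX]

lemma one_sub_le_toReal_measure {Ω : Type*} [MeasurableSpace Ω] {P : Measure Ω}
    [IsProbabilityMeasure P] {B G : Set Ω} {ε : ℝ} (hε : 0 ≤ ε) (hB : P B ≤ ENNReal.ofReal ε)
    (hBG : Bᶜ ⊆ G) : 1 - ε ≤ (P G).toReal := by
  have h1 : (1 : ℝ≥0∞) ≤ ENNReal.ofReal ε + P G :=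
    calc 1 = P (B ∪ Bᶜ) := by rw [union_compl_self, measure_univ]
      _ ≤ P B + P Bᶜ := measure_union_le _ _
      _ ≤ _ := add_le_add hB (measure_mono hBG)
  have h2 := ENNReal.toReal_mono (ENNReal.add_ne_top.2 ⟨ENNReal.ofReal_ne_top, measure_ne_top _ _⟩) h1
  rw [ENNReal.toReal_add ENNReal.ofReal_ne_top (measure_ne_top _ _), ENNReal.toReal_ofReal hε,
    ENNReal.toReal_one] at h2
  linarith

section Martingale

variable {d : ℕ}

def ballInnovations {Ω : Type*} (Y : V d → Ω → ℝ) (n : ℕ) (ω : Ω) : forwardBall d n → ℝ :=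
  (forwardBall d n).restrict fun v => Y v ω

def ballExtend {n : ℕ} (v : forwardBall d n → ℝ) : V d → ℝ :=
  fun z => if hz : z ∈ forwardBall d n then v ⟨z, hz⟩ else 0

lemma eqOn_ballExtend_ballInnovations {Ω : Type*} (Y : V d → Ω → ℝ) (n : ℕ) (ω : Ω) :
    EqOn (ballExtend (ballInnovations Y n ω)) (fun v => Y v ω) (forwardBall d n) :=
  fun z hz => by simp [ballExtend, ballInnovations, Finset.mem_coe.1 hz]

lemma measurable_ballExtend (n : ℕ) : Measurable (ballExtend (d := d) (n := n)) := by
  refine measurable_pi_lambda _ fun z => ?_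
  unfold ballExtend
  split_ifs
  exacts [measurable_pi_apply _, measurable_const]

lemma measurable_ballInnovations {Y : V d → Ω → ℝ} (hY : ∀ v, Measurable (Y v)) (n : ℕ) :
    Measurable (ballInnovations Y n) :=
  (Finset.measurable_restrict _).comp (measurable_pi_lambda _ hY)

def ballFiltration {Y : V d → Ω → ℝ} (hY : ∀ v, Measurable (Y v)) : Filtration ℕ ‹MeasurableSpace Ω› where
  seq n := MeasurableSpace.comap (ballInnovations Y n) inferInstance
  mono' _ _ hmn :=
    Measurable.comap_le <| (Finset.measurable_restrict₂ (X := fun _ => ℝ) (forwardBall_mono hmn)).comp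
      (comap_measurable _)
  le' n := (measurable_ballInnovations hY n).comap_le

variable {P : Measure Ω} {Y : V d → Ω → ℝ} {hstar : ℝ} {χ : ℝ → ℝ}

lemma measurable_clusterWeight_field (hY : ∀ v, Measurable (Y v)) (hχ : Measurable χ) (a : ℝ)
    (x : V d) : Measurable fun ω => clusterWeight d hstar χ (field d a fun v => Y v ω) x :=
  (measurable_clusterWeight hχ x).comp ((measurable_field a).comp (measurable_pi_lambda _ hY))

lemma measurable_clusterMass_field (hY : ∀ v, Measurable (Y v)) (hχ : Measurable χ) (a : ℝ)
    (n : ℕ) : Measurable fun ω => clusterMass d hstar χ (field d a fun v => Y v ω) n :=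
  (measurable_clusterMass hχ n).comp ((measurable_field a).comp (measurable_pi_lambda _ hY))

lemma indepFun_ballInnovations_child (hY : ∀ v, Measurable (Y v)) (hindep : iIndepFun Y P)
    {n : ℕ} {x : V d} (hx : x ∈ forwardSphere d n) (j : Fin d) :
    IndepFun (ballInnovations Y n) (Y (child d x j)) P := by
  have hyB : child d x j ∉ forwardBall d n := fun hy => by
    have := (mem_forwardBall.1 hy).1
    rw [depth_child, (mem_forwardSphere.1 hx).1] at this
    omega
  exact (hindep.indepFun_finset _ _ (Finset.disjoint_singleton_right.2 hyB) hY).comp measurable_id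
    (measurable_pi_apply (⟨_, Finset.mem_singleton_self _⟩ : ({child d x j} : Finset (V d))))

lemma IsCriticalPair.lintegral_ite_mem_cluster (hcrit : IsCriticalPair d hstar χ) (hd : d ≠ 0)
    (φ : V d → ℝ) (x : V d) :
    ∫⁻ u, (if x ∈ cluster d hstar φ then ENNReal.ofReal (χ (φ x / d + u)) else 0)
      ∂gaussianReal 0 (varY d) = clusterWeight d hstar χ φ x / d := by
  by_cases hx : x ∈ cluster d hstar φ
  · simp only [clusterWeight, if_pos hx]
    rw [hcrit.lintegral_gaussian hd (le_of_mem_cluster hx),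
      ENNReal.ofReal_div_of_pos (by positivity), ENNReal.ofReal_natCast]
  · simp [clusterWeight, hx]

lemma lintegral_clusterWeight_child_mul (hEnv : IsGFFEnv d P Y)
    (hcrit : IsCriticalPair d hstar χ) (hd : d ≠ 0) (a : ℝ) {n : ℕ} {x : V d}
    (hx : x ∈ forwardSphere d n) (j : Fin d) {g : (forwardBall d n → ℝ) → ℝ≥0∞}
    (hg : Measurable g) :
    ∫⁻ ω, clusterWeight d hstar χ (field d a fun v => Y v ω) (child d x j) *
        g (ballInnovations Y n ω) ∂P =
      (∫⁻ ω, clusterWeight d hstar χ (field d a fun v => Y v ω) x *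
        g (ballInnovations Y n ω) ∂P) / d := by
  have := hEnv.prob
  set y := child d x j
  set ψ : (forwardBall d n → ℝ) → V d → ℝ := fun v => field d a (ballExtend v)
  have hψ : Measurable ψ := (measurable_field a).comp (measurable_ballExtend n)
  have hxψ : ∀ ω, ∀ z ∈ pathFromRoot d x, ψ (ballInnovations Y n ω) z = field d a (Y · ω) z :=
    fun ω _ hz => eqOn_field (eqOn_ballExtend_ballInnovations Y n ω)
      (mem_forwardBall_of_mem_pathFromRoot (forwardSphere_subset_forwardBall le_rfl hx) hz)
  -- the weight of `y` as a function of the innovations in the ball and of `Y_y`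
  set F : (forwardBall d n → ℝ) × ℝ → ℝ≥0∞ := fun p =>
    g p.1 * if x ∈ cluster d hstar (ψ p.1) then ENNReal.ofReal (χ (ψ p.1 x / d + p.2)) else 0
  have hF : Measurable F :=
    (hg.comp measurable_fst).mul <| Measurable.ite
      ((measurableSet_mem_cluster x).preimage (hψ.comp measurable_fst))
      (hcrit.measurable_s12.comp ((((measurable_pi_apply x).comp (hψ.comp measurable_fst)).div_const
        _).add measurable_snd)).ennreal_ofReal measurable_const
  have hweight : ∀ ω, clusterWeight d hstar χ (field d a fun v => Y v ω) y *
      g (ballInnovations Y n ω) = F (ballInnovations Y n ω, Y y ω) := fun ω => by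
    rw [clusterWeight_child hcrit.zero, field_child, ← mem_cluster_congr (hxψ ω),
      ← hxψ ω x (mem_pathFromRoot_self x), mul_comm]
  have hlaw : P.map (Y y) = gaussianReal 0 (varY d) := by
    rw [hEnv.law, if_neg (child_ne_none x j)]
  calc _ = ∫⁻ ω, F (ballInnovations Y n ω, Y y ω) ∂P := lintegral_congr hweight
    _ = ∫⁻ ω, ∫⁻ u, F (ballInnovations Y n ω, u) ∂(P.map (Y y)) ∂P :=
        lintegral_comp_prodMk_of_indepFun (measurable_ballInnovations hEnv.meas n)
          (hEnv.meas y) (indepFun_ballInnovations_child hEnv.meas hEnv.indep hx j) hF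
    _ = ∫⁻ ω, clusterWeight d hstar χ (field d a fun v => Y v ω) x *
          g (ballInnovations Y n ω) * (d : ℝ≥0∞)⁻¹ ∂P := lintegral_congr fun ω => by
        have hχ := hcrit.measurable_s12
        simp only [hlaw, F]
        rw [lintegral_const_mul _ (by split_ifs <;> fun_prop),
          hcrit.lintegral_ite_mem_cluster hd, clusterWeight_congr (hxψ ω), div_eq_mul_inv]
        ring
    _ = _ := by
        rw [lintegral_mul_const' _ _ (by simp [hd]), div_eq_mul_inv]

lemma lintegral_clusterMass_succ_mul (hEnv : IsGFFEnv d P Y) (hcrit : IsCriticalPair d hstar χ)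
    (hd : d ≠ 0) (a : ℝ) (n : ℕ) {g : (forwardBall d n → ℝ) → ℝ≥0∞} (hg : Measurable g) :
    ∫⁻ ω, clusterMass d hstar χ (field d a fun v => Y v ω) (n + 1) * g (ballInnovations Y n ω) ∂P =
      ∫⁻ ω, clusterMass d hstar χ (field d a fun v => Y v ω) n * g (ballInnovations Y n ω) ∂P := by
  have hmeas : ∀ x, Measurable fun ω =>
      clusterWeight d hstar χ (field d a fun v => Y v ω) x * g (ballInnovations Y n ω) := fun x =>
    (measurable_clusterWeight_field hEnv.meas hcrit.measurable_s12 a x).mul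
      (hg.comp (measurable_ballInnovations hEnv.meas n))
  simp only [clusterMass, sum_forwardSphere_succ, Finset.sum_mul]
  rw [lintegral_finsetSum _ fun x _ => Finset.measurable_sum _ fun j _ => hmeas _,
    lintegral_finsetSum _ fun x _ => hmeas x]
  refine Finset.sum_congr rfl fun x hx => ?_
  rw [lintegral_finsetSum _ fun j _ => hmeas _]
  simp only [lintegral_clusterWeight_child_mul hEnv hcrit hd a hx _ hg, Finset.sum_const,
    Finset.card_univ, Fintype.card_fin, nsmul_eq_mul]
  exact ENNReal.mul_div_cancel (by simpa) (ENNReal.natCast_ne_top d)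

lemma lintegral_clusterMass (hEnv : IsGFFEnv d P Y) (hcrit : IsCriticalPair d hstar χ)
    (hd : d ≠ 0) {a : ℝ} (ha : hstar ≤ a) (n : ℕ) :
    ∫⁻ ω, clusterMass d hstar χ (field d a fun v => Y v ω) n ∂P = ENNReal.ofReal (χ a) := by
  have := hEnv.prob
  induction n with
  | zero => simp [clusterMass_zero (show hstar ≤ field d a _ none from ha), field]
  | succ n ih =>
    simpa [ih] using lintegral_clusterMass_succ_mul hEnv hcrit hd a n (g := fun _ => 1)
      measurable_const

lemma martingale_clusterMass (hEnv : IsGFFEnv d P Y) (hcrit : IsCriticalPair d hstar χ)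
    (hd : d ≠ 0) {a : ℝ} (ha : hstar ≤ a) :
    Martingale (fun n ω => (clusterMass d hstar χ (field d a fun v => Y v ω) n).toReal)
      (ballFiltration hEnv.meas) P := by
  have := hEnv.prob
  have hmeas := measurable_clusterMass_field hEnv.meas hcrit.measurable_s12 (hstar := hstar) a
  have hball : ∀ n ω, clusterMass d hstar χ (field d a fun v => Y v ω) n =
      clusterMass d hstar χ (field d a (ballExtend (ballInnovations Y n ω))) n := fun n ω =>
    clusterMass_congr le_rfl (eqOn_field (eqOn_ballExtend_ballInnovations Y n ω).symm)
  have hsetIntegral : ∀ (s : Set Ω) (k : ℕ), ∫ ω in s,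
      (clusterMass d hstar χ (field d a fun v => Y v ω) k).toReal ∂P =
      (∫⁻ ω in s, clusterMass d hstar χ (field d a fun v => Y v ω) k ∂P).toReal := fun _ k =>
    integral_toReal (hmeas k).aemeasurable (ae_of_all _ fun _ => (clusterMass_ne_top k).lt_top)
  refine martingale_of_setIntegral_eq_succ (fun n => ?_) (fun n => ?_) fun n s hs => ?_
  · refine Measurable.stronglyMeasurable ?_
    simp_rw [hball n]
    exact (((measurable_clusterMass hcrit.measurable_s12 n).comp ((measurable_field a).comp
      (measurable_ballExtend n))).ennreal_toReal).comp (comap_measurable _)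
  · exact integrable_toReal_of_lintegral_ne_top (hmeas n).aemeasurable
      (by rw [lintegral_clusterMass hEnv hcrit hd ha]; exact ENNReal.ofReal_ne_top)
  · obtain ⟨t, ht, rfl⟩ := hs
    have hind : ∀ k, ∫⁻ ω in ballInnovations Y n ⁻¹' t,
        clusterMass d hstar χ (field d a fun v => Y v ω) k ∂P =
        ∫⁻ ω, clusterMass d hstar χ (field d a fun v => Y v ω) k *
          t.indicator 1 (ballInnovations Y n ω) ∂P := fun k => by
      rw [← lintegral_indicator (measurable_ballInnovations hEnv.meas n ht)]
      congr with ω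
      by_cases hω : ballInnovations Y n ω ∈ t <;> simp [hω]
    rw [hsetIntegral, hsetIntegral, hind, hind, lintegral_clusterMass_succ_mul hEnv hcrit hd a n
      (measurable_one.indicator ht)]

lemma measure_exists_le_clusterMass_le (hEnv : IsGFFEnv d P Y) (hcrit : IsCriticalPair d hstar χ)
    (hd : d ≠ 0) {a : ℝ} (ha : hstar ≤ a) (c : ℝ≥0) :
    c * P {ω | ∃ n, (c : ℝ) ≤ (clusterMass d hstar χ (field d a fun v => Y v ω) n).toReal} ≤
      ENNReal.ofReal (χ a) := by
  have := hEnv.prob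
  have hmart := martingale_clusterMass hEnv hcrit hd ha
  set M : ℕ → Ω → ℝ := fun n ω => (clusterMass d hstar χ (field d a fun v => Y v ω) n).toReal
  set A : ℕ → Set Ω := fun n =>
    {ω | (c : ℝ) ≤ (Finset.range (n + 1)).sup' Finset.nonempty_range_add_one fun k => M k ω}
  have hA : {ω | ∃ n, (c : ℝ) ≤ M n ω} = ⋃ n, A n := by
    ext ω
    simp only [A, mem_iUnion, Set.mem_ofPred_eq, Finset.le_sup'_iff, Finset.mem_range]
    exact ⟨fun ⟨n, hn⟩ => ⟨n, n, by omega, hn⟩, fun ⟨_, k, _, hk⟩ => ⟨k, hk⟩⟩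
  have hAmono : Monotone A := fun m n hmn ω hω => by
    simp only [A, Set.mem_ofPred_eq, Finset.le_sup'_iff, Finset.mem_range] at hω ⊢
    obtain ⟨k, hk, hck⟩ := hω
    exact ⟨k, by omega, hck⟩
  rw [hA, hAmono.measure_iUnion, ENNReal.mul_iSup]
  refine iSup_le fun n =>
    (maximal_ineq hmart.submartingale (fun _ _ => ENNReal.toReal_nonneg) n).trans ?_
  calc ENNReal.ofReal (∫ ω in A n, M n ω ∂P) ≤ ENNReal.ofReal (∫ ω, M n ω ∂P) :=
        ENNReal.ofReal_le_ofReal (setIntegral_le_integral (hmart.integrable n)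
          (ae_of_all _ fun _ => ENNReal.toReal_nonneg))
    _ = ENNReal.ofReal (χ a) := by
        rw [integral_toReal (measurable_clusterMass_field hEnv.meas hcrit.measurable_s12 a n).aemeasurable
          (ae_of_all _ fun _ => (clusterMass_ne_top n).lt_top), lintegral_clusterMass hEnv hcrit hd ha,
          ENNReal.toReal_ofReal (hcrit.nonneg a)]

end Martingale

/-- Lemma `bounded_PhiZn`: for every `a ≥ h*` and `ε > 0` there are
`H < ∞` and `N < ∞` with `P_a[Φ_n ≤ H ∀ n] ≥ 1 − ε` and `P_a[|Z_n| ≤ N ∀ n] ≥ 1 − ε`,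
where `Z_n` is the `n`-th generation of `C_o^{h*} ∩ 𝕋⁺` and `Φ_n = max_{x ∈ Z_n} φ_x`
(`max ∅ = −∞`, so `Φ_n ≤ H` means every `x ∈ Z_n` has `φ_x ≤ H`). -/
theorem bounded_field_and_generations {Ω : Type} [MeasurableSpace Ω] (d : ℕ) (hd : 2 ≤ d)
    (P : Measure Ω) (Y : V d → Ω → ℝ) (hEnv : IsGFFEnv d P Y)
    (hstar : ℝ) (χ : ℝ → ℝ) (hcrit : IsCriticalPair d hstar χ)
    (a : ℝ) (ha : hstar ≤ a) (ε : ℝ) (hε : 0 < ε) :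
    ∃ H : ℝ, ∃ N : ℕ,
      1 - ε ≤ (P {ω | ∀ n : ℕ, ∀ x ∈ gen d hstar a Y ω n,
          field d a (fun v => Y v ω) x ≤ H}).toReal ∧
      1 - ε ≤ (P {ω | ∀ n : ℕ, (gen d hstar a Y ω n).encard ≤ (N : ℕ∞)}).toReal := by
  have := hEnv.prob
  obtain ⟨δ, hδ, hχδ⟩ := hcrit.exists_pos_le hd
  have hχa := hcrit.nonneg a
  set c : ℝ≥0 := ⟨χ a / ε + 1, by positivity⟩
  obtain ⟨H, hH⟩ := ((hcrit.tendsto_atTop hd).eventually_gt_atTop (c : ℝ)).exists_forall_of_atTop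
  set B := {ω | ∃ n, (c : ℝ) ≤ (clusterMass d hstar χ (field d a fun v => Y v ω) n).toReal}
  have hcval : (c : ℝ) = χ a / ε + 1 := rfl
  have hc : (0 : ℝ) < c := by rw [hcval]; positivity
  have hB : P B ≤ ENNReal.ofReal ε := by
    refine (ENNReal.mul_le_mul_iff_right (ENNReal.coe_pos.2 (NNReal.coe_pos.1 hc)).ne'
      ENNReal.coe_ne_top).1 ((measure_exists_le_clusterMass_le hEnv hcrit (by omega) ha c).trans ?_)
    rw [← ENNReal.ofReal_coe_nnreal, ← ENNReal.ofReal_mul hc.le]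
    refine ENNReal.ofReal_le_ofReal ?_
    rw [hcval, add_mul, div_mul_cancel₀ _ hε.ne']
    linarith
  have hgood : ∀ ω ∈ Bᶜ, ∀ n, (clusterMass d hstar χ (field d a fun v => Y v ω) n).toReal < c :=
    fun ω hω n => not_le.1 fun h => hω ⟨n, h⟩
  refine ⟨H, ⌈c / δ⌉₊, one_sub_le_toReal_measure hε.le hB fun ω hω n x hx => ?_,
    one_sub_le_toReal_measure hε.le hB fun ω hω n => encard_generation_le hδ hχδ (hgood ω hω n)⟩
  by_contra hHx
  exact (hH _ (not_le.1 hHx).le).not_gt (lt_of_clusterMass_lt hx.1 hx.2 (hgood ω hω n))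

end GFF
end
end

section
/- Let ρ be any centred Gaussian density on ℝ. Then there exist constants r, c ∈ (0,∞) such that for all x ∈ ℝ and all s with 0 < |s| < 1, |(ρ(x + s) − ρ(x))/s| ≤ c (ρ(x + r) + ρ(x − r)). -/
open MeasureTheory ProbabilityTheory Real Set Filter Topology NNReal
open scoped Classical ENNReal

noncomputable section

/-! By the mean value theorem the difference quotient is `ρ'(ξ) = -(ξ / v) ρ(ξ)` for some `ξ`
with `|ξ - x| ≤ 1`. The polynomial factor is absorbed into the exponential via `t ≤ exp t`:
`(|ξ| / v) ρ(ξ) ≤ (2πv)^{-1/2} exp ((2|ξ| - ξ²) / (2v))`, and `|x| ≤ |ξ| + 1` gives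
`2|ξ| - ξ² ≤ 5 - (|x| - 2)²`, so the quotient is at most `exp (5 / (2v)) ρ(|x| - 2)`, which is
`exp (5 / (2v))` times one of `ρ(x - 2)`, `ρ(x + 2)`. -/

lemma abs_slope_le_of_abs_deriv_le {f : ℝ → ℝ} {x s δ C : ℝ}
    (hf : ∀ y ∈ Metric.closedBall x δ, DifferentiableAt ℝ f y)
    (bound : ∀ y ∈ Metric.closedBall x δ, |deriv f y| ≤ C) (hs : s ≠ 0) (hsδ : |s| ≤ δ) :
    |(f (x + s) - f x) / s| ≤ C := by
  have hx : x ∈ Metric.closedBall x δ := Metric.mem_closedBall_self ((abs_nonneg s).trans hsδ)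
  have hxs : x + s ∈ Metric.closedBall x δ := by
    rwa [Metric.mem_closedBall, dist_eq_norm, add_sub_cancel_left, norm_eq_abs]
  have hmvt := (convex_closedBall x δ).norm_image_sub_le_of_norm_deriv_le hf bound hx hxs
  rw [norm_eq_abs, norm_eq_abs, add_sub_cancel_left] at hmvt
  rwa [abs_div, div_le_iff₀ (abs_pos.mpr hs)]

lemma hasDerivAt_gaussianPDFReal (μ : ℝ) (v : ℝ≥0) (x : ℝ) :
    HasDerivAt (gaussianPDFReal μ v) (-((x - μ) / v) * gaussianPDFReal μ v x) x := by
  have hexponent : HasDerivAt (fun y ↦ -(y - μ) ^ 2 / (2 * (v : ℝ))) (-((x - μ) / v)) x :=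
    (((hasDerivAt_id x).sub_const μ).pow 2).neg.div_const (2 * (v : ℝ)) |>.congr_deriv (by
      simp only [id, Nat.cast_ofNat]; ring)
  exact (hexponent.exp.const_mul (√(2 * π * v))⁻¹).congr_deriv (by rw [gaussianPDFReal]; ring)

lemma gaussianPDFReal_zero_neg (v : ℝ≥0) (x : ℝ) :
    gaussianPDFReal 0 v (-x) = gaussianPDFReal 0 v x := by
  simp only [gaussianPDFReal, sub_zero, neg_sq]

lemma gaussianPDFReal_zero_abs_sub_le (v : ℝ≥0) (x r : ℝ) :
    gaussianPDFReal 0 v (|x| - r) ≤ gaussianPDFReal 0 v (x + r) + gaussianPDFReal 0 v (x - r) := by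
  rcases abs_cases x with ⟨hx, -⟩ | ⟨hx, -⟩
  · rw [hx]
    linarith [gaussianPDFReal_nonneg 0 v (x + r)]
  · rw [hx, ← neg_add', gaussianPDFReal_zero_neg]
    linarith [gaussianPDFReal_nonneg 0 v (x - r)]

lemma abs_deriv_gaussianPDFReal_zero_le (v : ℝ≥0) {x ξ : ℝ} (h : |x| ≤ |ξ| + 1) :
    |deriv (gaussianPDFReal 0 v) ξ| ≤ exp (5 / (2 * v)) * gaussianPDFReal 0 v (|x| - 2) := by
  have hquadratic : 2 * |ξ| - ξ ^ 2 ≤ 5 - (|x| - 2) ^ 2 := by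
    rw [← sq_abs ξ]
    rcases le_total |x| 2 with hx2 | hx2
    · nlinarith [mul_nonneg (abs_nonneg x) (by linarith : (0 : ℝ) ≤ 4 - |x|), sq_nonneg (|ξ| - 1)]
    · nlinarith
  have hlinear : |ξ| / v ≤ exp (|ξ| / v) := by linarith [add_one_le_exp (|ξ| / v)]
  rw [(hasDerivAt_gaussianPDFReal 0 v ξ).deriv, abs_mul, abs_neg, abs_div, NNReal.abs_eq,
    abs_of_nonneg (gaussianPDFReal_nonneg 0 v ξ)]
  simp only [gaussianPDFReal, sub_zero]
  calc |ξ| / v * ((√(2 * π * v))⁻¹ * exp (-ξ ^ 2 / (2 * v)))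
      ≤ exp (|ξ| / v) * ((√(2 * π * v))⁻¹ * exp (-ξ ^ 2 / (2 * v))) := by gcongr
    _ = (√(2 * π * v))⁻¹ * exp ((2 * |ξ| - ξ ^ 2) / (2 * v)) := by
      rw [mul_left_comm, ← exp_add]
      ring_nf
    _ ≤ (√(2 * π * v))⁻¹ * exp ((5 - (|x| - 2) ^ 2) / (2 * v)) := by gcongr
    _ = exp (5 / (2 * v)) * ((√(2 * π * v))⁻¹ * exp (-(|x| - 2) ^ 2 / (2 * v))) := by
      rw [mul_left_comm, ← exp_add]
      ring_nf

theorem gaussian_density_difference_bound_general (v : ℝ≥0) :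
    ∃ r c : ℝ, 0 < r ∧ 0 < c ∧ ∀ x s : ℝ, s ≠ 0 → |s| < 1 →
      |(gaussianPDFReal 0 v (x + s) - gaussianPDFReal 0 v x) / s| ≤
        c * (gaussianPDFReal 0 v (x + r) + gaussianPDFReal 0 v (x - r)) := by
  refine ⟨2, exp (5 / (2 * v)), two_pos, exp_pos _, fun x s hs hs1 ↦ ?_⟩
  refine abs_slope_le_of_abs_deriv_le
    (fun y _ ↦ (hasDerivAt_gaussianPDFReal 0 v y).differentiableAt) (fun ξ hξ ↦ ?_) hs hs1.le
  have hx : |x| ≤ |ξ| + 1 := by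
    rw [Metric.mem_closedBall, dist_eq_norm, norm_eq_abs] at hξ
    linarith [abs_sub_abs_le_abs_sub x ξ, abs_sub_comm x ξ]
  calc |deriv (gaussianPDFReal 0 v) ξ|
      ≤ exp (5 / (2 * v)) * gaussianPDFReal 0 v (|x| - 2) :=
        abs_deriv_gaussianPDFReal_zero_le v hx
    _ ≤ _ := by gcongr; exact gaussianPDFReal_zero_abs_sub_le v x 2

/-- Lemma `phi_dominant`: for every centred Gaussian density `ρ`
(variance `v > 0`) there are `r, c ∈ (0,∞)` such that for all `x ∈ ℝ` and
`0 < |s| < 1`, `|(ρ(x+s) − ρ(x))/s| ≤ c (ρ(x+r) + ρ(x−r))`. -/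
theorem gaussian_density_difference_bound (v : ℝ≥0) (hv : 0 < v) :
    ∃ r c : ℝ, 0 < r ∧ 0 < c ∧ ∀ x s : ℝ, s ≠ 0 → |s| < 1 →
      |(gaussianPDFReal 0 v (x + s) - gaussianPDFReal 0 v x) / s| ≤
        c * (gaussianPDFReal 0 v (x + r) + gaussianPDFReal 0 v (x - r)) :=
  gaussian_density_difference_bound_general v

end
end
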